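/- Let C : ℝⁿ → ℝ be differentiable with L-Lipschitz gradient, let U be a random vector with ‖U‖ = r a.s., and let G = (d/(2r²))(C(K+U) − C(K−U))·U for a constant d ≥ 1. Then E‖G‖² ≤ 8d²(Lr)² + 2d²‖∇C(K)‖². -/

import Mathlib

open MeasureTheory

/-! Applying the mean value inequality to `f - Df(x)` on the ball of radius `‖u‖` bounds each
Taylor remainder `f(x ± u) - f(x) ∓ Df(x) u` by `L‖u‖²`. The linear parts add up to `2 Df(x) u`,
so `|C(K+U) - C(K-U)| ≤ 2Lr² + 2‖∇C(K)‖r` and `‖G‖ ≤ |d| (Lr + ‖∇C(K)‖)` almost surely;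
`(a + b)² ≤ 2a² + 2b²` then bounds `‖G‖²` pointwise, hence in expectation. -/

section Taylor

variable {E F : Type*} [NormedAddCommGroup E] [NormedSpace ℝ E]
  [NormedAddCommGroup F] [NormedSpace ℝ F] {f : E → F} {L : ℝ} {x : E}

theorem norm_image_add_sub_sub_fderiv_le (hL : 0 ≤ L) (hf : Differentiable ℝ f)
    (hLip : ∀ y, ‖fderiv ℝ f y - fderiv ℝ f x‖ ≤ L * ‖y - x‖) (u : E) :
    ‖f (x + u) - f x - fderiv ℝ f x u‖ ≤ L * ‖u‖ ^ 2 := by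
  have hbound : ∀ y ∈ Metric.closedBall x ‖u‖,
      ‖fderiv ℝ f y - fderiv ℝ f x‖ ≤ L * ‖u‖ := fun y hy =>
    (hLip y).trans (mul_le_mul_of_nonneg_left (mem_closedBall_iff_norm.mp hy) hL)
  have hmvt := (convex_closedBall x ‖u‖).norm_image_sub_le_of_norm_fderiv_le'
    (fun y _ => hf y) hbound (Metric.mem_closedBall_self (norm_nonneg u))
    (by simp : x + u ∈ Metric.closedBall x ‖u‖)
  simpa [sq, mul_assoc] using hmvt

theorem norm_image_add_sub_image_sub_le (hL : 0 ≤ L) (hf : Differentiable ℝ f)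
    (hLip : ∀ y, ‖fderiv ℝ f y - fderiv ℝ f x‖ ≤ L * ‖y - x‖) (u : E) :
    ‖f (x + u) - f (x - u)‖ ≤ 2 * L * ‖u‖ ^ 2 + 2 * ‖fderiv ℝ f x‖ * ‖u‖ := by
  have hplus := norm_image_add_sub_sub_fderiv_le hL hf hLip u
  have hminus := norm_image_add_sub_sub_fderiv_le hL hf hLip (-u)
  rw [← sub_eq_add_neg, norm_neg, map_neg] at hminus
  have hlin : ‖fderiv ℝ f x u‖ ≤ ‖fderiv ℝ f x‖ * ‖u‖ := (fderiv ℝ f x).le_opNorm u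
  calc ‖f (x + u) - f (x - u)‖
      = ‖(f (x + u) - f x - fderiv ℝ f x u) - (f (x - u) - f x - -fderiv ℝ f x u)
          + (2 : ℝ) • fderiv ℝ f x u‖ := by congr 1; rw [two_smul]; abel
    _ ≤ ‖f (x + u) - f x - fderiv ℝ f x u‖ + ‖f (x - u) - f x - -fderiv ℝ f x u‖
          + 2 * ‖fderiv ℝ f x u‖ := by
        grw [norm_add_le, norm_sub_le, norm_smul, Real.norm_two]
    _ ≤ 2 * L * ‖u‖ ^ 2 + 2 * ‖fderiv ℝ f x‖ * ‖u‖ := by linarith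

end Taylor

section TwoPoint

variable {E : Type*} [NormedAddCommGroup E] [NormedSpace ℝ E]

noncomputable def twoPointEstimate (f : E → ℝ) (d : ℝ) (x u : E) : E :=
  (d / (2 * ‖u‖ ^ 2) * (f (x + u) - f (x - u))) • u

theorem norm_twoPointEstimate_le {f : E → ℝ} {L : ℝ} {x : E} (hL : 0 ≤ L)
    (hf : Differentiable ℝ f) (hLip : ∀ y, ‖fderiv ℝ f y - fderiv ℝ f x‖ ≤ L * ‖y - x‖)
    (d : ℝ) (u : E) :
    ‖twoPointEstimate f d x u‖ ≤ |d| * (L * ‖u‖ + ‖fderiv ℝ f x‖) := by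
  rcases eq_or_ne u 0 with rfl | hu
  · rw [twoPointEstimate, smul_zero, norm_zero]
    positivity
  have hpos : 0 < ‖u‖ := norm_pos_iff.mpr hu
  have hdiff := norm_image_add_sub_image_sub_le hL hf hLip u
  rw [Real.norm_eq_abs] at hdiff
  calc ‖twoPointEstimate f d x u‖
      = |d| / (2 * ‖u‖ ^ 2) * |f (x + u) - f (x - u)| * ‖u‖ := by
        rw [twoPointEstimate, norm_smul, Real.norm_eq_abs, abs_mul, abs_div,
          abs_of_pos (by positivity : (0 : ℝ) < 2 * ‖u‖ ^ 2)]
    _ ≤ |d| / (2 * ‖u‖ ^ 2) * (2 * L * ‖u‖ ^ 2 + 2 * ‖fderiv ℝ f x‖ * ‖u‖) * ‖u‖ := by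
        gcongr
    _ = |d| * (L * ‖u‖ + ‖fderiv ℝ f x‖) := by field_simp

end TwoPoint

section Gradient

variable {F : Type*} [NormedAddCommGroup F] [InnerProductSpace ℝ F] [CompleteSpace F]

theorem norm_fderiv_eq_norm_gradient (f : F → ℝ) (x : F) :
    ‖fderiv ℝ f x‖ = ‖gradient f x‖ := by
  rw [← toDual_gradient, LinearIsometryEquiv.norm_map]

theorem norm_fderiv_sub_fderiv_eq_norm_gradient_sub (f : F → ℝ) (x y : F) :
    ‖fderiv ℝ f y - fderiv ℝ f x‖ = ‖gradient f y - gradient f x‖ := by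
  rw [← toDual_gradient, ← toDual_gradient, ← map_sub, LinearIsometryEquiv.norm_map]

end Gradient

theorem stmt_8_general {Ω : Type*} [MeasurableSpace Ω] (μ : Measure Ω) [IsProbabilityMeasure μ]
    {n : ℕ} (C : EuclideanSpace ℝ (Fin n) → ℝ) (L d r : ℝ)
    (hL : 0 ≤ L)
    (hdiff : Differentiable ℝ C)
    (hLip : ∀ x y, ‖gradient C x - gradient C y‖ ≤ L * ‖x - y‖)
    (U : Ω → EuclideanSpace ℝ (Fin n))
    (hU : ∀ᵐ ω ∂μ, ‖U ω‖ = r)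
    (K : EuclideanSpace ℝ (Fin n))
    (G : Ω → EuclideanSpace ℝ (Fin n))
    (hG : ∀ ω, G ω = (d / (2 * r ^ 2) * (C (K + U ω) - C (K - U ω))) • U ω) :
    ∫ ω, ‖G ω‖ ^ 2 ∂μ ≤ 8 * d ^ 2 * (L * r) ^ 2 + 2 * d ^ 2 * ‖gradient C K‖ ^ 2 := by
  set g := ‖gradient C K‖
  have hLipDeriv : ∀ y, ‖fderiv ℝ C y - fderiv ℝ C K‖ ≤ L * ‖y - K‖ := fun y => by
    rw [norm_fderiv_sub_fderiv_eq_norm_gradient_sub]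
    exact hLip y K
  have hpointwise : ∀ᵐ ω ∂μ, ‖G ω‖ ^ 2 ≤ 8 * d ^ 2 * (L * r) ^ 2 + 2 * d ^ 2 * g ^ 2 := by
    filter_upwards [hU] with ω hω
    have hGω : G ω = twoPointEstimate C d K (U ω) := by rw [hG, twoPointEstimate, hω]
    have hnorm := norm_twoPointEstimate_le hL hdiff hLipDeriv d (U ω)
    rw [← hGω, hω, norm_fderiv_eq_norm_gradient] at hnorm
    calc ‖G ω‖ ^ 2 ≤ d ^ 2 * (L * r + g) ^ 2 := by rw [← sq_abs d, ← mul_pow]; gcongr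
      _ ≤ d ^ 2 * (2 * ((L * r) ^ 2 + g ^ 2)) := by gcongr; exact add_sq_le
      _ ≤ 8 * d ^ 2 * (L * r) ^ 2 + 2 * d ^ 2 * g ^ 2 := by nlinarith [sq_nonneg (d * L * r)]
  calc ∫ ω, ‖G ω‖ ^ 2 ∂μ
      ≤ ∫ _, 8 * d ^ 2 * (L * r) ^ 2 + 2 * d ^ 2 * g ^ 2 ∂μ :=
        integral_mono_of_nonneg (.of_forall fun _ => by positivity) (integrable_const _) hpointwise
    _ = 8 * d ^ 2 * (L * r) ^ 2 + 2 * d ^ 2 * g ^ 2 := by simp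

/-- Second-moment bound for the single-sample two-point zeroth-order
estimator `G = (d/(2r²))(C(K+U) − C(K−U))·U`:
`E‖G‖² ≤ 8d²(Lr)² + 2d²‖∇C(K)‖²`. -/
theorem stmt_8 {Ω : Type*} [MeasurableSpace Ω] (μ : Measure Ω) [IsProbabilityMeasure μ]
    {n : ℕ} (C : EuclideanSpace ℝ (Fin n) → ℝ) (L d r : ℝ)
    (hL : 0 ≤ L) (hd : 1 ≤ d) (hr : 0 < r)
    (hdiff : Differentiable ℝ C)
    (hLip : ∀ x y, ‖gradient C x - gradient C y‖ ≤ L * ‖x - y‖)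
    (U : Ω → EuclideanSpace ℝ (Fin n))
    (hU : ∀ᵐ ω ∂μ, ‖U ω‖ = r)
    (K : EuclideanSpace ℝ (Fin n))
    (G : Ω → EuclideanSpace ℝ (Fin n))
    (hG : ∀ ω, G ω = (d / (2 * r ^ 2) * (C (K + U ω) - C (K - U ω))) • U ω)
    (hint : Integrable (fun ω => ‖G ω‖ ^ 2) μ) :
    ∫ ω, ‖G ω‖ ^ 2 ∂μ ≤ 8 * d ^ 2 * (L * r) ^ 2 + 2 * d ^ 2 * ‖gradient C K‖ ^ 2 :=
  stmt_8_general μ C L d r hL hdiff hLip U hU K G hG
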